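/- Let ω ∈ 𝒟 and Ψ ∈ 𝓛. Then there exists a constant C > 0 such that ∫_r^1 Ψ(1/(1−s))·(ω̂(s)/(1−s)) ds ≤ C·∫_r^1 Ψ(1/(1−s))·ω(s) ds for all 0 ≤ r < 1. -/
import Mathlib


open MeasureTheory Real Set

/-- `Ψ` is essentially increasing on `[0,∞)`. -/
def EssInc (Ψ : ℝ → ℝ) : Prop := ∃ C > (0:ℝ), ∀ x y : ℝ, 0 ≤ x → x ≤ y → Ψ x ≤ C * Ψ y

/-- `Ψ` is essentially decreasing on `[0,∞)`. -/
def EssDec (Ψ : ℝ → ℝ) : Prop := ∃ C > (0:ℝ), ∀ x y : ℝ, 0 ≤ x → x ≤ y → Ψ y ≤ C * Ψ x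

/-- The doubling property `Ψ(x) ≍ Ψ(x²)` on `[0,∞)`. -/
def Doubling (Ψ : ℝ → ℝ) : Prop :=
  ∃ c > (0:ℝ), ∃ C > (0:ℝ), ∀ x : ℝ, 0 ≤ x → c * Ψ (x ^ 2) ≤ Ψ x ∧ Ψ x ≤ C * Ψ (x ^ 2)

/-- The class `𝓛`: positive, essentially monotonic, doubling. -/
def InL (Ψ : ℝ → ℝ) : Prop :=
  (∀ x : ℝ, 0 ≤ x → 0 < Ψ x) ∧ (EssInc Ψ ∨ EssDec Ψ) ∧ Doubling Ψ

/-- Tail integral of a radial weight. -/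
noncomputable def omHat (ω : ℝ → ℝ) (r : ℝ) : ℝ := ∫ s in r..1, ω s

/-- The class `𝒟̂` of radial weights with doubling tails. -/
def Dhat (ω : ℝ → ℝ) : Prop :=
  ∃ C : ℝ, 1 ≤ C ∧ ∀ r ∈ Set.Ico (0:ℝ) 1, omHat ω r ≤ C * omHat ω ((1 + r) / 2)

/-- The class `𝒟̌` of radial weights with reverse-doubling tails. -/
def Dcheck (ω : ℝ → ℝ) : Prop :=
  ∃ K : ℝ, 1 < K ∧ ∃ C : ℝ, 1 < C ∧ ∀ r ∈ Set.Ico (0:ℝ) 1,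
    C * omHat ω (1 - (1 - r) / K) ≤ omHat ω r

section Aux

variable {ω : ℝ → ℝ}

/-- integrability on subintervals of `[0,1]` -/
lemma subInt (hint : IntervalIntegrable ω volume 0 1) {a b : ℝ}
    (ha : 0 ≤ a) (ha1 : a ≤ 1) (hb : 0 ≤ b) (hb1 : b ≤ 1) :
    IntervalIntegrable ω volume a b := by
  refine hint.mono_set (uIcc_subset_uIcc ?_ ?_) <;>
    rw [uIcc_of_le (by norm_num : (0:ℝ) ≤ 1)]
  · exact ⟨ha, ha1⟩
  · exact ⟨hb, hb1⟩

lemma omHat_split (hint : IntervalIntegrable ω volume 0 1) {a b : ℝ}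
    (ha : 0 ≤ a) (hab : a ≤ b) (hb1 : b ≤ 1) :
    omHat ω a = (∫ s in a..b, ω s) + omHat ω b := by
  unfold omHat
  rw [intervalIntegral.integral_add_adjacent_intervals
    (subInt hint ha (hab.trans hb1) (ha.trans hab) hb1)
    (subInt hint (ha.trans hab) hb1 (by norm_num) le_rfl)]

lemma intNonneg (hnn : ∀ r ∈ Set.Ico (0:ℝ) 1, 0 ≤ ω r) {a b : ℝ}
    (ha : 0 ≤ a) (hab : a ≤ b) (hb1 : b ≤ 1) :
    0 ≤ ∫ s in a..b, ω s := by
  apply intervalIntegral.integral_nonneg_of_ae_restrict hab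
  have h1 : ∀ᵐ s : ℝ ∂(volume.restrict (Icc a b)), s ≠ 1 := by
    refine ae_restrict_of_ae ?_
    have h2 : {s : ℝ | ¬ s ≠ 1} = {1} := by ext s; simp
    rw [ae_iff, h2]
    exact measure_singleton 1
  filter_upwards [h1, ae_restrict_mem measurableSet_Icc] with s hs1 hs2
  exact hnn s ⟨ha.trans hs2.1, lt_of_le_of_ne (hs2.2.trans hb1) hs1⟩

lemma omHat_nonneg (hnn : ∀ r ∈ Set.Ico (0:ℝ) 1, 0 ≤ ω r) {a : ℝ}
    (ha : 0 ≤ a) (ha1 : a ≤ 1) : 0 ≤ omHat ω a :=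
  intNonneg hnn ha ha1 le_rfl

lemma omHat_anti (hnn : ∀ r ∈ Set.Ico (0:ℝ) 1, 0 ≤ ω r)
    (hint : IntervalIntegrable ω volume 0 1) {a b : ℝ}
    (ha : 0 ≤ a) (hab : a ≤ b) (hb1 : b ≤ 1) :
    omHat ω b ≤ omHat ω a := by
  rw [omHat_split hint ha hab hb1]
  linarith [intNonneg hnn ha hab hb1]

lemma intEqOmHatSub (hint : IntervalIntegrable ω volume 0 1) {a b : ℝ}
    (ha : 0 ≤ a) (hab : a ≤ b) (hb1 : b ≤ 1) :
    (∫ s in a..b, ω s) = omHat ω a - omHat ω b := by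
  rw [omHat_split hint ha hab hb1]; ring

section Dc

variable {K C : ℝ} (hK : 1 < K) (hC : 1 < C)
  (hDc : ∀ r ∈ Set.Ico (0:ℝ) 1, C * omHat ω (1 - (1 - r) / K) ≤ omHat ω r)

include hK in
lemma q_mem {r : ℝ} (hr : r ∈ Set.Ico (0:ℝ) 1) (n : ℕ) :
    1 - (1 - r) / K ^ n ∈ Set.Ico r 1 := by
  have hK0 : (0:ℝ) < K := lt_trans one_pos hK
  have hKn : (1:ℝ) ≤ K ^ n := one_le_pow₀ hK.le
  have hKnp : (0:ℝ) < K ^ n := pow_pos hK0 n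
  have h1r : 0 < 1 - r := by linarith [hr.2]
  constructor
  · have : (1 - r) / K ^ n ≤ 1 - r := div_le_self h1r.le hKn
    linarith
  · have : 0 < (1 - r) / K ^ n := div_pos h1r hKnp
    linarith

include hK hDc in
lemma omHat_iter (hC0 : 0 < C) {r : ℝ} (hr : r ∈ Set.Ico (0:ℝ) 1) :
    ∀ n : ℕ, C ^ n * omHat ω (1 - (1 - r) / K ^ n) ≤ omHat ω r := by
  intro n
  induction n with
  | zero => simp
  | succ n ih =>
    have hqmem : 1 - (1 - r) / K ^ n ∈ Set.Ico (0:ℝ) 1 :=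
      ⟨hr.1.trans (q_mem hK hr n).1, (q_mem hK hr n).2⟩
    have h1 := hDc _ hqmem
    have hK0 : (0:ℝ) < K := lt_trans one_pos hK
    have harg : 1 - (1 - (1 - (1 - r) / K ^ n)) / K = 1 - (1 - r) / K ^ (n + 1) := by
      have hKn : (K:ℝ) ^ n ≠ 0 := (pow_pos hK0 n).ne'
      field_simp
      ring
    rw [harg] at h1
    calc C ^ (n+1) * omHat ω (1 - (1 - r) / K ^ (n+1))
        = C ^ n * (C * omHat ω (1 - (1 - r) / K ^ (n+1))) := by ring
      _ ≤ C ^ n * omHat ω (1 - (1 - r) / K ^ n) :=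
          mul_le_mul_of_nonneg_left h1 (pow_nonneg hC0.le n)
      _ ≤ omHat ω r := ih

include hK in
/-- floor-based block estimates -/
lemma floor_block {R : ℝ} (hR : 1 ≤ R) :
    (K:ℝ) ^ (⌊Real.logb K R⌋₊) ≤ R ∧ R < K ^ (⌊Real.logb K R⌋₊ + 1) := by
  have hK0 : (0:ℝ) < K := lt_trans one_pos hK
  have hR0 : (0:ℝ) < R := lt_of_lt_of_le one_pos hR
  have hlb0 : 0 ≤ Real.logb K R := Real.logb_nonneg hK hR
  constructor
  · calc (K:ℝ) ^ (⌊Real.logb K R⌋₊) = K ^ ((⌊Real.logb K R⌋₊ : ℝ)) :=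
        (Real.rpow_natCast K _).symm
      _ ≤ K ^ Real.logb K R := Real.rpow_le_rpow_of_exponent_le hK.le (Nat.floor_le hlb0)
      _ = R := Real.rpow_logb hK0 hK.ne' hR0
  · calc R = K ^ Real.logb K R := (Real.rpow_logb hK0 hK.ne' hR0).symm
      _ < K ^ ((⌊Real.logb K R⌋₊ : ℝ) + 1) := by
          apply Real.rpow_lt_rpow_of_exponent_lt hK
          push_cast
          exact Nat.lt_floor_add_one _
      _ = K ^ (⌊Real.logb K R⌋₊ + 1) := by
          rw [← Real.rpow_natCast K (⌊Real.logb K R⌋₊ + 1)]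
          push_cast
          ring_nf

include hK hC hDc in
lemma omHat_decay (hnn : ∀ r ∈ Set.Ico (0:ℝ) 1, 0 ≤ ω r)
    (hint : IntervalIntegrable ω volume 0 1)
    {r s : ℝ} (hr : r ∈ Set.Ico (0:ℝ) 1) (hrs : r ≤ s) (hs1 : s < 1) :
    omHat ω s ≤ C * ((1 - s) / (1 - r)) ^ (Real.logb K C) * omHat ω r := by
  set α := Real.logb K C with hα
  have hK0 : (0:ℝ) < K := lt_trans one_pos hK
  have hC0 : (0:ℝ) < C := lt_trans one_pos hC
  have h1s : 0 < 1 - s := by linarith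
  have h1r : 0 < 1 - r := by linarith [hr.2]
  set R := (1 - r) / (1 - s) with hR
  have hR1 : 1 ≤ R := (one_le_div h1s).mpr (by linarith)
  have hR0 : 0 < R := lt_of_lt_of_le one_pos hR1
  set n := ⌊Real.logb K R⌋₊ with hn
  obtain ⟨hKn, hKn1⟩ := floor_block hK hR1
  have hα0 : 0 ≤ α := Real.logb_nonneg hK hC.le
  have hKα : K ^ α = C := Real.rpow_logb hK0 hK.ne' hC0
  have hKnp : (0:ℝ) < K ^ n := pow_pos hK0 n
  -- q n ≤ s
  have hqs : 1 - (1 - r) / K ^ n ≤ s := by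
    have h2 : 1 - s ≤ (1 - r) / K ^ n := by
      rw [le_div_iff₀ hKnp]
      have h3 : (1 - s) * K ^ n ≤ (1 - s) * R := mul_le_mul_of_nonneg_left hKn h1s.le
      have h4 : (1 - s) * R = 1 - r := by
        rw [hR]; field_simp
      linarith
    linarith
  have hq0 : 0 ≤ 1 - (1 - r) / K ^ n := hr.1.trans (q_mem hK hr n).1
  have h1 : omHat ω s ≤ omHat ω (1 - (1 - r) / K ^ n) :=
    omHat_anti hnn hint hq0 hqs hs1.le
  have h2 : C ^ n * omHat ω (1 - (1 - r) / K ^ n) ≤ omHat ω r :=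
    omHat_iter hK hDc hC0 hr n
  -- power identities
  have hpow : ∀ m : ℕ, ((K:ℝ) ^ m) ^ α = C ^ m := by
    intro m
    rw [← Real.rpow_natCast K m, ← Real.rpow_natCast C m, ← Real.rpow_mul hK0.le,
      mul_comm, Real.rpow_mul hK0.le, hKα]
  have hRα : R ^ α ≤ C ^ n * C := by
    calc R ^ α ≤ ((K:ℝ) ^ (n+1)) ^ α := Real.rpow_le_rpow hR0.le hKn1.le hα0
      _ = C ^ (n+1) := hpow (n+1)
      _ = C ^ n * C := pow_succ C n
  have hCn : (0:ℝ) < C ^ n := pow_pos hC0 n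
  have hRα0 : 0 < R ^ α := Real.rpow_pos_of_pos hR0 α
  have hωr : 0 ≤ omHat ω r := omHat_nonneg hnn hr.1 hr.2.le
  have key : 1 / C ^ n ≤ C * (R ^ α)⁻¹ := by
    have h5 : R ^ α ≤ C * C ^ n := by linarith
    calc 1 / C ^ n = C / (C * C ^ n) := by
          field_simp
      _ ≤ C / R ^ α := div_le_div_of_nonneg_left hC0.le hRα0 h5
      _ = C * (R ^ α)⁻¹ := div_eq_mul_inv C _
  have h6 : omHat ω (1 - (1 - r) / K ^ n) ≤ omHat ω r / C ^ n := by
    rw [le_div_iff₀ hCn]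
    linarith [h2]
  have h7 : ((1 - s) / (1 - r)) ^ α = (R ^ α)⁻¹ := by
    rw [← Real.inv_rpow hR0.le]
    congr 1
    rw [hR]
    field_simp
  calc omHat ω s ≤ omHat ω r / C ^ n := h1.trans h6
    _ = omHat ω r * (1 / C ^ n) := by ring
    _ ≤ omHat ω r * (C * (R ^ α)⁻¹) := mul_le_mul_of_nonneg_left key hωr
    _ = C * ((1 - s) / (1 - r)) ^ α * omHat ω r := by rw [h7]; ring

end Dc

end Aux

section Psi

variable {Ψ : ℝ → ℝ}

lemma psi_claimA (hpos : ∀ x : ℝ, 0 ≤ x → 0 < Ψ x) {c : ℝ} (hc : 0 < c)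
    (hsq : ∀ x : ℝ, 0 ≤ x → c * Ψ (x ^ 2) ≤ Ψ x) :
    ∀ n : ℕ, ∀ z : ℝ, 0 ≤ z → Ψ (z ^ 2 ^ n) ≤ c⁻¹ ^ n * Ψ z := by
  intro n
  induction n with
  | zero => intro z hz; simp
  | succ n ih =>
    intro z hz
    have h1 : z ^ 2 ^ (n+1) = (z ^ 2 ^ n) ^ 2 := by
      rw [pow_succ, pow_mul]
    have h2 : c * Ψ ((z ^ 2 ^ n) ^ 2) ≤ Ψ (z ^ 2 ^ n) := hsq _ (pow_nonneg hz _)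
    have h3 := ih z hz
    rw [h1]
    have hstep : Ψ ((z ^ 2 ^ n) ^ 2) ≤ c⁻¹ * Ψ (z ^ 2 ^ n) := by
      rw [← div_eq_inv_mul, le_div_iff₀ hc]
      linarith
    calc Ψ ((z ^ 2 ^ n) ^ 2) ≤ c⁻¹ * Ψ (z ^ 2 ^ n) := hstep
      _ ≤ c⁻¹ * (c⁻¹ ^ n * Ψ z) :=
          mul_le_mul_of_nonneg_left h3 (inv_pos.mpr hc).le
      _ = c⁻¹ ^ (n+1) * Ψ z := by ring

/-- Ψ grows slower than any positive power. -/
lemma psi_upper (hΨ : InL Ψ) {ε : ℝ} (hε : 0 < ε) :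
    ∃ B : ℝ, 0 < B ∧ ∀ x y : ℝ, 1 ≤ x → x ≤ y → Ψ y ≤ B * (y / x) ^ ε * Ψ x := by
  obtain ⟨hpos, hmono, c₀, hc₀, Cd, hCd, hdbl⟩ := hΨ
  rcases hmono with hinc | hdec
  case inr =>
    obtain ⟨C₁, hC₁, hdec⟩ := hdec
    refine ⟨C₁, hC₁, fun x y hx hxy => ?_⟩
    have h0x : (0:ℝ) ≤ x := le_trans zero_le_one hx
    have h1 : Ψ y ≤ C₁ * Ψ x := hdec x y h0x hxy
    have h2 : 1 ≤ (y / x) ^ ε := Real.one_le_rpow ((one_le_div (by linarith)).mpr hxy) hε.le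
    have h3 : 0 < Ψ x := hpos x h0x
    calc Ψ y ≤ C₁ * Ψ x := h1
      _ = C₁ * 1 * Ψ x := by ring
      _ ≤ C₁ * (y / x) ^ ε * Ψ x := by
          apply mul_le_mul_of_nonneg_right _ h3.le
          exact mul_le_mul_of_nonneg_left h2 (by linarith)
  case inl =>
    obtain ⟨C₁, hC₁, hinc⟩ := hinc
    set c : ℝ := min c₀ 1 with hcdef
    have hc : 0 < c := lt_min hc₀ one_pos
    have hc1 : c ≤ 1 := min_le_right _ _
    have hsq : ∀ x : ℝ, 0 ≤ x → c * Ψ (x ^ 2) ≤ Ψ x := by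
      intro x hx
      have h1 := (hdbl x hx).1
      have h2 : 0 < Ψ (x ^ 2) := hpos _ (by positivity)
      have h3 : c * Ψ (x ^ 2) ≤ c₀ * Ψ (x ^ 2) :=
        mul_le_mul_of_nonneg_right (min_le_left _ _) h2.le
      linarith
    have hA := psi_claimA hpos hc hsq
    have hcinv : 1 ≤ c⁻¹ := (one_le_inv₀ hc).mpr hc1
    set β : ℝ := Real.logb 2 c⁻¹ with hβ
    have hβ0 : 0 ≤ β := Real.logb_nonneg one_lt_two hcinv
    set δ' : ℝ := ε / max β 1 with hδ'
    have hmax : 0 < max β 1 := lt_of_lt_of_le one_pos (le_max_right _ _)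
    have hδ'0 : 0 < δ' := div_pos hε hmax
    have hδ'β : δ' * β ≤ ε := by
      rw [hδ', div_mul_eq_mul_div, div_le_iff₀ hmax]
      have h : β ≤ max β 1 := le_max_left _ _
      nlinarith
    set A : ℝ := 2 * (1 + 1 / (δ' * Real.log 2)) with hA2
    have hlog2 : 0 < Real.log 2 := Real.log_pos one_lt_two
    have hA0 : 0 < A := by
      have h1 : 0 < δ' * Real.log 2 := mul_pos hδ'0 hlog2
      have h2 : 0 < 1 / (δ' * Real.log 2) := by positivity
      rw [hA2]; linarith
    have hΨ1 : 0 < Ψ 1 := hpos 1 one_pos.le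
    have hΨ2 : 0 < Ψ 2 := hpos 2 (by norm_num)
    -- main claim for 2 ≤ x
    have claimB : ∀ x y : ℝ, 2 ≤ x → x ≤ y → Ψ y ≤ (C₁ * A ^ β) * (y / x) ^ ε * Ψ x := by
      intro x y hx hxy
      have hx1 : (1:ℝ) < x := by linarith
      have hx0 : (0:ℝ) < x := by linarith
      have hy0 : (0:ℝ) < y := by linarith
      set L : ℝ := Real.logb x y with hL
      have hL1 : 1 ≤ L := by
        rw [hL, Real.le_logb_iff_rpow_le hx1 hy0]
        simpa using hxy
      have hL0 : 0 < L := lt_of_lt_of_le one_pos hL1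
      set n : ℕ := ⌈Real.logb 2 L⌉₊ with hn
      have hlb0 : 0 ≤ Real.logb 2 L := Real.logb_nonneg one_lt_two hL1
      have h2n : L ≤ (2:ℝ) ^ n := by
        calc L = (2:ℝ) ^ Real.logb 2 L := (Real.rpow_logb two_pos (by norm_num) hL0).symm
          _ ≤ (2:ℝ) ^ ((n:ℝ)) := Real.rpow_le_rpow_of_exponent_le one_le_two (Nat.le_ceil _)
          _ = (2:ℝ) ^ n := Real.rpow_natCast 2 n
      have h2n' : (2:ℝ) ^ n ≤ 2 * L := by
        have hceil : (n:ℝ) ≤ Real.logb 2 L + 1 := by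
          rw [hn]
          exact_mod_cast (Nat.ceil_lt_add_one hlb0).le
        calc (2:ℝ) ^ n = (2:ℝ) ^ ((n:ℝ)) := (Real.rpow_natCast 2 n).symm
          _ ≤ (2:ℝ) ^ (Real.logb 2 L + 1) := Real.rpow_le_rpow_of_exponent_le one_le_two hceil
          _ = (2:ℝ) ^ Real.logb 2 L * 2 := by
              rw [Real.rpow_add two_pos, Real.rpow_one]
          _ = 2 * L := by rw [Real.rpow_logb two_pos (by norm_num) hL0]; ring
      have hxy2 : y ≤ x ^ 2 ^ n := by
        calc y = x ^ L := (Real.rpow_logb hx0 hx1.ne' hy0).symm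
          _ ≤ x ^ (((2:ℝ)) ^ n) := Real.rpow_le_rpow_of_exponent_le hx1.le h2n
          _ = x ^ (((2 ^ n : ℕ) : ℝ)) := by norm_num
          _ = x ^ (2 ^ n : ℕ) := Real.rpow_natCast x _
      have hstep1 : Ψ y ≤ C₁ * Ψ (x ^ 2 ^ n) := hinc y _ hy0.le hxy2
      have hstep2 : Ψ (x ^ 2 ^ n) ≤ c⁻¹ ^ n * Ψ x := hA n x hx0.le
      have hcinv0 : (0:ℝ) < c⁻¹ := inv_pos.mpr hc
      have hcn : c⁻¹ ^ n = ((2:ℝ) ^ n) ^ β := by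
        conv_lhs => rw [← Real.rpow_logb two_pos (by norm_num) hcinv0, ← hβ]
        rw [← Real.rpow_natCast ((2:ℝ) ^ β) n, ← Real.rpow_natCast (2:ℝ) n,
          ← Real.rpow_mul (by norm_num : (0:ℝ) ≤ 2),
          ← Real.rpow_mul (by norm_num : (0:ℝ) ≤ 2), mul_comm]
      have h2L : ((2:ℝ) ^ n) ^ β ≤ (2 * L) ^ β :=
        Real.rpow_le_rpow (by positivity) h2n' hβ0
      set t : ℝ := y / x with ht
      have ht1 : 1 ≤ t := (one_le_div hx0).mpr hxy
      have ht0 : 0 < t := lt_of_lt_of_le one_pos ht1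
      have htδ : 1 ≤ t ^ δ' := Real.one_le_rpow ht1 hδ'0.le
      have hlogt : Real.log t ≤ t ^ δ' / δ' := by
        have h1 : Real.log (t ^ δ') ≤ t ^ δ' - 1 :=
          Real.log_le_sub_one_of_pos (Real.rpow_pos_of_pos ht0 δ')
        rw [Real.log_rpow ht0] at h1
        rw [le_div_iff₀ hδ'0]
        nlinarith
      have h2LA : 2 * L ≤ A * t ^ δ' := by
        have hlogy : Real.log t = Real.log y - Real.log x := Real.log_div hy0.ne' hx0.ne'
        have hlogx : Real.log 2 ≤ Real.log x := by
          have := Real.log_le_log (by norm_num : (0:ℝ) < 2) hx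
          linarith
        have hlogt0 : 0 ≤ Real.log t := Real.log_nonneg ht1
        have hLval : L = Real.log y / Real.log x := by
          rw [hL, Real.logb, Real.log_div_log]
        have hL2 : L ≤ 1 + Real.log t / Real.log 2 := by
          rw [hLval]
          have h5 : Real.log y = Real.log x + Real.log t := by linarith
          rw [h5, add_div]
          have hlx0 : 0 < Real.log x := lt_of_lt_of_le hlog2 hlogx
          have h6 : Real.log x / Real.log x = 1 := div_self hlx0.ne'
          have h7 : Real.log t / Real.log x ≤ Real.log t / Real.log 2 :=
            div_le_div_of_nonneg_left hlogt0 hlog2 hlogx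
          linarith
        have h8 : Real.log t / Real.log 2 ≤ t ^ δ' / (δ' * Real.log 2) := by
          rw [div_le_div_iff₀ hlog2 (by positivity)]
          calc Real.log t * (δ' * Real.log 2) = (Real.log t * δ') * Real.log 2 := by ring
            _ ≤ t ^ δ' * Real.log 2 := by
                apply mul_le_mul_of_nonneg_right _ hlog2.le
                rw [← le_div_iff₀ hδ'0] at *
                linarith [hlogt]
        have h9 : t ^ δ' / (δ' * Real.log 2) = (1 / (δ' * Real.log 2)) * t ^ δ' := by ring
        have h10 : (0:ℝ) < 1 / (δ' * Real.log 2) := by positivity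
        have hAval : A * t ^ δ' = 2 * t ^ δ' + 2 * ((1 / (δ' * Real.log 2)) * t ^ δ') := by
          rw [hA2]; ring
        rw [hAval]
        have h11 : 2 ≤ 2 * t ^ δ' := by linarith
        have h12 : Real.log t / Real.log 2 ≤ (1 / (δ' * Real.log 2)) * t ^ δ' := by
          rw [← h9]; exact h8
        linarith
      have hΨx : 0 < Ψ x := hpos x hx0.le
      have hfin1 : c⁻¹ ^ n ≤ A ^ β * t ^ ε := by
        have e1 : ((2:ℝ) * L) ^ β ≤ (A * t ^ δ') ^ β :=
          Real.rpow_le_rpow (by positivity) h2LA hβ0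
        have e2 : (A * t ^ δ') ^ β = A ^ β * t ^ (δ' * β) := by
          rw [Real.mul_rpow hA0.le (by positivity), ← Real.rpow_mul ht0.le]
        have e3 : t ^ (δ' * β) ≤ t ^ ε := Real.rpow_le_rpow_of_exponent_le ht1 hδ'β
        calc c⁻¹ ^ n = ((2:ℝ) ^ n) ^ β := hcn
          _ ≤ (2 * L) ^ β := h2L
          _ ≤ A ^ β * t ^ (δ' * β) := by rw [← e2]; exact e1
          _ ≤ A ^ β * t ^ ε := mul_le_mul_of_nonneg_left e3 (by positivity)
      calc Ψ y ≤ C₁ * Ψ (x ^ 2 ^ n) := hstep1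
        _ ≤ C₁ * (c⁻¹ ^ n * Ψ x) := mul_le_mul_of_nonneg_left hstep2 (by linarith)
        _ ≤ C₁ * ((A ^ β * t ^ ε) * Ψ x) := by
            apply mul_le_mul_of_nonneg_left _ (by linarith : (0:ℝ) ≤ C₁)
            exact mul_le_mul_of_nonneg_right hfin1 hΨx.le
        _ = (C₁ * A ^ β) * (y / x) ^ ε * Ψ x := by rw [← ht]; ring
    -- glue
    set B₁ : ℝ := C₁ * A ^ β with hB₁
    have hB₁0 : 0 < B₁ := mul_pos hC₁ (Real.rpow_pos_of_pos hA0 β)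
    set B₂ : ℝ := C₁ * C₁ * Ψ 2 / Ψ 1 with hB₂
    have hB₂0 : 0 < B₂ := div_pos (mul_pos (mul_pos hC₁ hC₁) hΨ2) hΨ1
    set B₃ : ℝ := B₁ * (C₁ * Ψ 2 / Ψ 1) with hB₃
    have hB₃0 : 0 < B₃ := mul_pos hB₁0 (div_pos (mul_pos hC₁ hΨ2) hΨ1)
    refine ⟨B₁ + B₂ + B₃, by linarith, fun x y hx hxy => ?_⟩
    have hx0 : (0:ℝ) < x := lt_of_lt_of_le one_pos hx
    have hy0 : (0:ℝ) < y := lt_of_lt_of_le hx0 hxy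
    have hΨx : 0 < Ψ x := hpos x hx0.le
    have htε : 1 ≤ (y / x) ^ ε :=
      Real.one_le_rpow ((one_le_div hx0).mpr hxy) hε.le
    have hQ0 : (0:ℝ) ≤ (y / x) ^ ε * Ψ x := by positivity
    have final : ∀ D : ℝ, D ≤ B₁ + B₂ + B₃ → Ψ y ≤ D * ((y / x) ^ ε * Ψ x) →
        Ψ y ≤ (B₁ + B₂ + B₃) * (y / x) ^ ε * Ψ x := by
      intro D hDle hle
      calc Ψ y ≤ D * ((y / x) ^ ε * Ψ x) := hle
        _ ≤ (B₁ + B₂ + B₃) * ((y / x) ^ ε * Ψ x) := mul_le_mul_of_nonneg_right hDle hQ0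
        _ = (B₁ + B₂ + B₃) * (y / x) ^ ε * Ψ x := (mul_assoc _ _ _).symm
    rcases le_or_gt 2 x with h2x | h2x
    · have h := claimB x y h2x hxy
      rw [mul_assoc] at h
      exact final B₁ (by linarith) h
    · rcases le_or_gt y 2 with h2y | h2y
      · have e1 : Ψ y ≤ C₁ * Ψ 2 := hinc y 2 (by linarith) h2y
        have e2 : Ψ 1 ≤ C₁ * Ψ x := hinc 1 x one_pos.le hx
        have e3 : Ψ y ≤ B₂ * Ψ x := by
          rw [hB₂, div_mul_eq_mul_div, le_div_iff₀ hΨ1]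
          calc Ψ y * Ψ 1 ≤ (C₁ * Ψ 2) * (C₁ * Ψ x) :=
              mul_le_mul e1 e2 hΨ1.le (by positivity)
            _ = C₁ * C₁ * Ψ 2 * Ψ x := by ring
        have e4 : B₂ * Ψ x ≤ B₂ * ((y / x) ^ ε * Ψ x) := by
          apply mul_le_mul_of_nonneg_left _ hB₂0.le
          exact le_mul_of_one_le_left hΨx.le htε
        exact final B₂ (by linarith) (e3.trans e4)
      · have e0 := claimB 2 y le_rfl h2y.le
        have e4 : ((y:ℝ) / 2) ^ ε ≤ (y / x) ^ ε := by
          apply Real.rpow_le_rpow (by positivity) _ hε.le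
          exact div_le_div_of_nonneg_left hy0.le hx0 h2x.le
        have e2 : Ψ 1 ≤ C₁ * Ψ x := hinc 1 x one_pos.le hx
        have e5 : Ψ 2 ≤ (C₁ * Ψ 2 / Ψ 1) * Ψ x := by
          rw [div_mul_eq_mul_div, le_div_iff₀ hΨ1]
          calc Ψ 2 * Ψ 1 ≤ Ψ 2 * (C₁ * Ψ x) := mul_le_mul_of_nonneg_left e2 hΨ2.le
            _ = C₁ * Ψ 2 * Ψ x := by ring
        have e6 : Ψ y ≤ B₁ * ((y / x) ^ ε * ((C₁ * Ψ 2 / Ψ 1) * Ψ x)) := by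
          calc Ψ y ≤ B₁ * (y / 2) ^ ε * Ψ 2 := e0
            _ ≤ B₁ * (y / x) ^ ε * Ψ 2 := by
                apply mul_le_mul_of_nonneg_right _ hΨ2.le
                exact mul_le_mul_of_nonneg_left e4 hB₁0.le
            _ ≤ B₁ * (y / x) ^ ε * ((C₁ * Ψ 2 / Ψ 1) * Ψ x) := by
                apply mul_le_mul_of_nonneg_left e5 (by positivity)
            _ = B₁ * ((y / x) ^ ε * ((C₁ * Ψ 2 / Ψ 1) * Ψ x)) := by ring
        have e8 : B₁ * ((y / x) ^ ε * ((C₁ * Ψ 2 / Ψ 1) * Ψ x)) = B₃ * ((y / x) ^ ε * Ψ x) := by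
          rw [hB₃]; ring
        exact final B₃ (by linarith) (e8 ▸ e6)

/-- Ψ is comparable from below on K-blocks. -/
lemma psi_lower (hΨ : InL Ψ) {K : ℝ} (hK : 1 < K) :
    ∃ m : ℝ, 0 < m ∧ ∀ x y : ℝ, 1 ≤ x → x ≤ y → y ≤ K * x → m * Ψ x ≤ Ψ y := by
  obtain ⟨hpos, hmono, c₀, hc₀, Cd, hCd, hdbl⟩ := hΨ
  rcases hmono with hinc | hdec
  case inl =>
    obtain ⟨C₁, hC₁, hinc⟩ := hinc
    refine ⟨C₁⁻¹, inv_pos.mpr hC₁, fun x y hx hxy _ => ?_⟩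
    have h1 : Ψ x ≤ C₁ * Ψ y := hinc x y (by linarith) hxy
    rw [← div_eq_inv_mul, div_le_iff₀ hC₁]
    linarith
  case inr =>
    obtain ⟨C₁, hC₁, hdec⟩ := hdec
    have hΨ1 : 0 < Ψ 1 := hpos 1 one_pos.le
    have hΨK2 : 0 < Ψ (K ^ 2) := hpos _ (by positivity)
    set m₁ : ℝ := (Cd * C₁)⁻¹ with hm₁
    set m₂ : ℝ := Ψ (K ^ 2) / (C₁ * C₁ * Ψ 1) with hm₂
    have hm₁0 : 0 < m₁ := inv_pos.mpr (mul_pos hCd hC₁)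
    have hm₂0 : 0 < m₂ := div_pos hΨK2 (by positivity)
    refine ⟨min m₁ m₂, lt_min hm₁0 hm₂0, fun x y hx hxy hyK => ?_⟩
    have hx0 : (0:ℝ) < x := lt_of_lt_of_le one_pos hx
    have hy0 : (0:ℝ) < y := lt_of_lt_of_le hx0 hxy
    have hΨy : 0 < Ψ y := hpos y hy0.le
    have hΨx : 0 < Ψ x := hpos x hx0.le
    rcases le_or_gt K x with hKx | hKx
    · -- y ≤ K x ≤ x²
      have h1 : y ≤ x ^ 2 := by nlinarith
      have h2 : Ψ (x ^ 2) ≤ C₁ * Ψ y := hdec y (x ^ 2) hy0.le h1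
      have h3 : Ψ x ≤ Cd * Ψ (x ^ 2) := (hdbl x hx0.le).2
      have h4 : m₁ * Ψ x ≤ Ψ y := by
        rw [hm₁, ← div_eq_inv_mul, div_le_iff₀ (mul_pos hCd hC₁)]
        nlinarith
      calc min m₁ m₂ * Ψ x ≤ m₁ * Ψ x :=
          mul_le_mul_of_nonneg_right (min_le_left _ _) hΨx.le
        _ ≤ Ψ y := h4
    · -- x < K, y ≤ Kx < K²
      have h1 : y ≤ K ^ 2 := by nlinarith
      have h2 : Ψ (K ^ 2) ≤ C₁ * Ψ y := hdec y (K ^ 2) hy0.le h1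
      have h3 : Ψ x ≤ C₁ * Ψ 1 := hdec 1 x one_pos.le hx
      have h4 : m₂ * Ψ x ≤ Ψ y := by
        rw [hm₂, div_mul_eq_mul_div, div_le_iff₀ (by positivity)]
        nlinarith
      calc min m₁ m₂ * Ψ x ≤ m₂ * Ψ x :=
          mul_le_mul_of_nonneg_right (min_le_right _ _) hΨx.le
        _ ≤ Ψ y := h4

end Psi

section KeyInt

variable {ω : ℝ → ℝ}

lemma key_integrableOn (hnn : ∀ r ∈ Set.Ico (0:ℝ) 1, 0 ≤ ω r)
    (hint : IntervalIntegrable ω volume 0 1) {K C : ℝ} (hK : 1 < K) (hC : 1 < C)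
    (hDc : ∀ r ∈ Set.Ico (0:ℝ) 1, C * omHat ω (1 - (1 - r) / K) ≤ omHat ω r)
    {r δ : ℝ} (hr : r ∈ Set.Ico (0:ℝ) 1) (hδ : 0 < δ) (hδC : K ^ δ < C) :
    IntegrableOn (fun s => (1 - s) ^ (-δ) * ω s) (Set.Ioc r 1) volume := by
  have hK0 : (0:ℝ) < K := lt_trans one_pos hK
  have hC0 : (0:ℝ) < C := lt_trans one_pos hC
  have h1r : 0 < 1 - r := by linarith [hr.2]
  set q : ℕ → ℝ := fun n => 1 - (1 - r) / K ^ n with hqdef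
  have hq_memIco : ∀ n, q n ∈ Set.Ico r 1 := fun n => q_mem hK hr n
  have hq_mono : ∀ m n : ℕ, m ≤ n → q m ≤ q n := by
    intro m n hmn
    have h1 : (K:ℝ) ^ m ≤ K ^ n := pow_le_pow_right₀ hK.le hmn
    have h2 : (1 - r) / K ^ n ≤ (1 - r) / K ^ m :=
      div_le_div_of_nonneg_left h1r.le (pow_pos hK0 m) h1
    simp only [hqdef]; linarith
  have hunion : Set.Ico r 1 = ⋃ n : ℕ, Set.Ico (q n) (q (n+1)) := by
    apply Subset.antisymm
    · intro s hs
      have h1s : 0 < 1 - s := by linarith [hs.2]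
      set R := (1 - r) / (1 - s) with hR
      have hR1 : 1 ≤ R := (one_le_div h1s).mpr (by linarith [hs.1])
      obtain ⟨hKn, hKn1⟩ := floor_block hK hR1
      set n := ⌊Real.logb K R⌋₊ with hn
      refine mem_iUnion.mpr ⟨n, ?_, ?_⟩
      · have h2 : 1 - s ≤ (1 - r) / K ^ n := by
          rw [le_div_iff₀ (pow_pos hK0 n)]
          have h3 : (1 - s) * K ^ n ≤ (1 - s) * R := mul_le_mul_of_nonneg_left hKn h1s.le
          have h4 : (1 - s) * R = 1 - r := by rw [hR]; field_simp
          linarith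
        simp only [hqdef]; linarith
      · have h2 : (1 - r) / K ^ (n+1) < 1 - s := by
          rw [div_lt_iff₀ (pow_pos hK0 (n+1))]
          have h3 : (1 - s) * R < (1 - s) * K ^ (n+1) := by
            exact mul_lt_mul_of_pos_left hKn1 h1s
          have h4 : (1 - s) * R = 1 - r := by rw [hR]; field_simp
          linarith
        simp only [hqdef]; linarith
    · refine iUnion_subset fun n => ?_
      intro s hs
      exact ⟨le_trans (hq_memIco n).1 hs.1, lt_of_lt_of_le hs.2 (hq_memIco (n+1)).2.le⟩
  have hdisj : Pairwise (Function.onFun Disjoint fun n : ℕ => Set.Ico (q n) (q (n+1))) := by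
    intro m n hmn
    rcases hmn.lt_or_gt with h | h
    · rw [Function.onFun, Set.Ico_disjoint_Ico]
      exact le_trans (min_le_left _ _) (le_trans (hq_mono _ _ h) (le_max_right _ _))
    · rw [Function.onFun, Set.Ico_disjoint_Ico]
      exact le_trans (min_le_right _ _) (le_trans (hq_mono _ _ h) (le_max_left _ _))
  have hωm : AEStronglyMeasurable ω (volume.restrict (Set.Ioc r 1)) :=
    (hint.1.mono_set (Set.Ioc_subset_Ioc hr.1 le_rfl)).aestronglyMeasurable
  have hrpm : Measurable fun s : ℝ => (1 - s) ^ (-δ) := by fun_prop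
  have haesm : AEStronglyMeasurable (fun s => (1 - s) ^ (-δ) * ω s)
      (volume.restrict (Set.Ioc r 1)) := hrpm.aestronglyMeasurable.mul hωm
  refine ⟨haesm, ?_⟩
  have hfnn : ∀ s ∈ Set.Ioc r 1, 0 ≤ (1 - s) ^ (-δ) * ω s := by
    intro s hs
    rcases eq_or_lt_of_le hs.2 with h | h
    · rw [← h]
      norm_num [Real.zero_rpow (by linarith : -δ ≠ 0)]
    · exact mul_nonneg (Real.rpow_nonneg (by linarith) _)
        (hnn s ⟨le_trans hr.1 hs.1.le, h⟩)
  rw [hasFiniteIntegral_iff_ofReal ((ae_restrict_iff' measurableSet_Ioc).mpr (ae_of_all _ hfnn))]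
  have hIcoIoc : Set.Ico r 1 =ᵐ[volume] Set.Ioc r 1 := Ico_ae_eq_Ioc
  rw [← setLIntegral_congr hIcoIoc, hunion,
    lintegral_iUnion (fun n => measurableSet_Ico) hdisj]
  set D : ℝ := (1 - r) ^ (-δ) * K ^ δ * omHat ω r with hD
  have hωr0 : 0 ≤ omHat ω r := omHat_nonneg hnn hr.1 hr.2.le
  have hD0 : 0 ≤ D := by
    apply mul_nonneg (mul_nonneg (Real.rpow_nonneg h1r.le _) (Real.rpow_pos_of_pos hK0 δ).le) hωr0
  set ρ : ℝ := K ^ δ / C with hρ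
  have hρ0 : 0 ≤ ρ := div_nonneg (Real.rpow_pos_of_pos hK0 δ).le hC0.le
  have hρ1 : ρ < 1 := (div_lt_one hC0).mpr hδC
  have hblock : ∀ n : ℕ, (∫⁻ s in Set.Ico (q n) (q (n+1)), ENNReal.ofReal ((1 - s) ^ (-δ) * ω s))
      ≤ ENNReal.ofReal D * ENNReal.ofReal ρ ^ n := by
    intro n
    set bn : ℝ := ((1 - r) / K ^ (n+1)) ^ (-δ) with hbn
    have hbnbase : 0 < (1 - r) / K ^ (n+1) := div_pos h1r (pow_pos hK0 (n+1))
    have hbn0 : 0 < bn := Real.rpow_pos_of_pos hbnbase _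
    have hsubIco : Set.Ico (q n) (q (n+1)) ⊆ Set.Ico (0:ℝ) 1 := by
      intro s hs
      exact ⟨le_trans (le_trans hr.1 (hq_memIco n).1) hs.1,
        lt_of_lt_of_le hs.2 (hq_memIco (n+1)).2.le⟩
    have hptwise : ∀ s ∈ Set.Ico (q n) (q (n+1)), (1 - s) ^ (-δ) * ω s ≤ bn * ω s := by
      intro s hs
      have hωs : 0 ≤ ω s := hnn s (hsubIco hs)
      apply mul_le_mul_of_nonneg_right _ hωs
      have h1 : (1 - r) / K ^ (n+1) ≤ 1 - s := by
        have h2 := hs.2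
        simp only [hqdef] at h2
        linarith
      rw [Real.rpow_neg (by linarith : (0:ℝ) ≤ 1 - s), hbn, Real.rpow_neg hbnbase.le]
      apply inv_anti₀ (Real.rpow_pos_of_pos hbnbase δ)
      exact Real.rpow_le_rpow hbnbase.le h1 hδ.le
    have hmono : (∫⁻ s in Set.Ico (q n) (q (n+1)), ENNReal.ofReal ((1 - s) ^ (-δ) * ω s))
        ≤ ∫⁻ s in Set.Ico (q n) (q (n+1)), ENNReal.ofReal (bn * ω s) := by
      apply lintegral_mono_ae
      filter_upwards [ae_restrict_mem measurableSet_Ico] with s hs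
      exact ENNReal.ofReal_le_ofReal (hptwise s hs)
    have hq0n : 0 ≤ q n := le_trans hr.1 (hq_memIco n).1
    have hq0n1 : 0 ≤ q (n+1) := le_trans hr.1 (hq_memIco (n+1)).1
    have hInt : IntegrableOn ω (Set.Ico (q n) (q (n+1))) volume := by
      have h3 : IntervalIntegrable ω volume (q n) (q (n+1)) :=
        subInt hint hq0n (hq_memIco n).2.le hq0n1 (hq_memIco (n+1)).2.le
      have h4 : IntegrableOn ω (Set.Ioc (q n) (q (n+1))) volume :=
        (intervalIntegrable_iff_integrableOn_Ioc_of_le (hq_mono n (n+1) (Nat.le_succ n))).mp h3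
      rw [integrableOn_Ico_iff_integrableOn_Ioo]
      exact h4.mono_set Set.Ioo_subset_Ioc_self
    have hωnn_ae : 0 ≤ᵐ[volume.restrict (Set.Ico (q n) (q (n+1)))] ω :=
      (ae_restrict_iff' measurableSet_Ico).mpr (ae_of_all _ fun s hs => hnn s (hsubIco hs))
    have hIntEq : (∫⁻ s in Set.Ico (q n) (q (n+1)), ENNReal.ofReal (ω s))
        = ENNReal.ofReal (∫ s in Set.Ico (q n) (q (n+1)), ω s) :=
      (ofReal_integral_eq_lintegral_ofReal hInt hωnn_ae).symm
    have hub : (∫ s in Set.Ico (q n) (q (n+1)), ω s) ≤ omHat ω r / C ^ n := by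
      rw [setIntegral_congr_set (Ico_ae_eq_Ioc),
        ← intervalIntegral.integral_of_le (hq_mono n (n+1) (Nat.le_succ n)),
        intEqOmHatSub hint hq0n (hq_mono n (n+1) (Nat.le_succ n)) (hq_memIco (n+1)).2.le]
      have h5 : C ^ n * omHat ω (q n) ≤ omHat ω r := omHat_iter hK hDc hC0 hr n
      have h6 : 0 ≤ omHat ω (q (n+1)) := omHat_nonneg hnn hq0n1 (hq_memIco (n+1)).2.le
      have h7 : omHat ω (q n) ≤ omHat ω r / C ^ n := by
        rw [le_div_iff₀ (pow_pos hC0 n)]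
        linarith
      linarith
    have e2 : ((K:ℝ) ^ (n+1)) ^ δ = (K ^ δ) ^ (n+1) := by
      rw [← Real.rpow_natCast K (n+1), ← Real.rpow_mul hK0.le, mul_comm,
        Real.rpow_mul hK0.le, Real.rpow_natCast]
    have e1 : bn = (1 - r) ^ (-δ) * (K ^ δ) ^ (n+1) := by
      rw [hbn, Real.div_rpow h1r.le (pow_pos hK0 (n+1)).le,
        Real.rpow_neg (pow_pos hK0 (n+1)).le, div_inv_eq_mul, e2]
    calc (∫⁻ s in Set.Ico (q n) (q (n+1)), ENNReal.ofReal ((1 - s) ^ (-δ) * ω s))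
        ≤ ∫⁻ s in Set.Ico (q n) (q (n+1)), ENNReal.ofReal (bn * ω s) := hmono
      _ = ENNReal.ofReal bn * ∫⁻ s in Set.Ico (q n) (q (n+1)), ENNReal.ofReal (ω s) := by
          simp_rw [ENNReal.ofReal_mul hbn0.le]
          rw [lintegral_const_mul' _ _ ENNReal.ofReal_ne_top]
      _ ≤ ENNReal.ofReal bn * ENNReal.ofReal (omHat ω r / C ^ n) := by
          rw [hIntEq]
          exact mul_le_mul_right (ENNReal.ofReal_le_ofReal hub) _
      _ = ENNReal.ofReal (bn * (omHat ω r / C ^ n)) := (ENNReal.ofReal_mul hbn0.le).symm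
      _ = ENNReal.ofReal (D * ρ ^ n) := by
          congr 1
          rw [e1, hD, hρ, div_pow]
          have hCn : (C:ℝ) ^ n ≠ 0 := (pow_pos hC0 n).ne'
          field_simp
          ring
      _ = ENNReal.ofReal D * ENNReal.ofReal ρ ^ n := by
          rw [ENNReal.ofReal_mul hD0, ENNReal.ofReal_pow hρ0]
  refine lt_of_le_of_lt (ENNReal.tsum_le_tsum hblock) ?_
  rw [ENNReal.tsum_mul_left, ENNReal.tsum_geometric]
  apply ENNReal.mul_lt_top ENNReal.ofReal_lt_top
  rw [ENNReal.inv_lt_top, tsub_pos_iff_lt]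
  exact ENNReal.ofReal_lt_one.mpr hρ1

end KeyInt

lemma ae_ne_one : ∀ᵐ s : ℝ ∂volume, s ≠ (1:ℝ) := by
  have h2 : {s : ℝ | ¬ s ≠ 1} = {1} := by ext s; simp
  rw [ae_iff, h2]; exact measure_singleton 1

set_option maxHeartbeats 1000000 in
theorem stmt13 (ω Ψ : ℝ → ℝ) (hnn : ∀ r ∈ Set.Ico (0:ℝ) 1, 0 ≤ ω r)
    (hint : IntervalIntegrable ω volume 0 1)
    (hD : Dhat ω ∧ Dcheck ω) (hΨ : InL Ψ) (hΨm : Measurable Ψ) :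
    ∃ C > (0:ℝ), ∀ r ∈ Set.Ico (0:ℝ) 1,
      (∫ s in r..1, Ψ (1 / (1 - s)) * (omHat ω s / (1 - s))) ≤
        C * ∫ s in r..1, Ψ (1 / (1 - s)) * ω s := by
  obtain ⟨-, K, hK, C, hC, hDc⟩ := hD
  have hpos := hΨ.1
  have hK0 : (0:ℝ) < K := lt_trans one_pos hK
  have hC0 : (0:ℝ) < C := lt_trans one_pos hC
  set α : ℝ := Real.logb K C with hα
  have hα0 : 0 < α := Real.logb_pos hK hC
  set δ : ℝ := α / 2 with hδdef
  have hδ0 : 0 < δ := by positivity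
  have hδC : K ^ δ < C := by
    have h1 : K ^ α = C := Real.rpow_logb hK0 hK.ne' hC0
    calc K ^ δ < K ^ α := Real.rpow_lt_rpow_of_exponent_lt hK (by linarith)
      _ = C := h1
  obtain ⟨B, hB0, hBprop⟩ := psi_upper hΨ hδ0
  obtain ⟨m, hm0, hmprop⟩ := psi_lower hΨ hK
  have hC1 : 0 < 1 - 1/C := by
    have h2 : 1/C < 1 := by rw [div_lt_one hC0]; exact hC
    linarith
  have hA₁0 : 0 < B * C / δ := by positivity
  have hA₂0 : 0 < m * (1 - 1/C) := mul_pos hm0 hC1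
  refine ⟨(B * C / δ) / (m * (1 - 1/C)), div_pos hA₁0 hA₂0, fun r hr => ?_⟩
  have h1r : 0 < 1 - r := by linarith [hr.2]
  set X : ℝ := 1 / (1 - r) with hX
  have hX1 : 1 ≤ X := by
    rw [hX]
    exact one_le_one_div h1r (by linarith [hr.1])
  have hΨX : 0 < Ψ X := hpos X (by linarith)
  have hωr0 : 0 ≤ omHat ω r := omHat_nonneg hnn hr.1 hr.2.le
  -- pointwise bounds
  have hL1 : ∀ s, r ≤ s → s < 1 → Ψ (1/(1-s)) ≤ B * ((1-r)/(1-s)) ^ δ * Ψ X := by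
    intro s hrs hs1
    have h1s : 0 < 1 - s := by linarith
    have hYX : X ≤ 1/(1-s) := by
      rw [hX]
      exact one_div_le_one_div_of_le h1s (by linarith)
    have hdiv : (1/(1-s)) / X = (1-r)/(1-s) := by
      rw [hX]; field_simp
    have h3 := hBprop X (1/(1-s)) hX1 hYX
    rwa [hdiv] at h3
  have hL2 : ∀ s, r ≤ s → s < 1 → omHat ω s ≤ C * ((1-s)/(1-r)) ^ α * omHat ω r :=
    fun s hrs hs1 => omHat_decay hK hC hDc hnn hint hr hrs hs1
  set M : ℝ := B * C * Ψ X * omHat ω r * (1-r) ^ (-δ) with hM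
  have hM0 : 0 ≤ M :=
    mul_nonneg (mul_nonneg (mul_nonneg (mul_nonneg hB0.le hC0.le) hΨX.le) hωr0)
      (Real.rpow_nonneg h1r.le _)
  have hL3 : ∀ s ∈ Set.Icc r 1, Ψ (1/(1-s)) * (omHat ω s / (1-s)) ≤ M * (1-s) ^ (δ - 1) := by
    intro s hs
    rcases eq_or_lt_of_le hs.2 with h | h
    · subst h
      have h4 : omHat ω 1 = 0 := by simp [omHat]
      rw [h4]
      norm_num
      exact mul_nonneg hM0 (Real.rpow_nonneg le_rfl _)
    · have h1s : 0 < 1 - s := by linarith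
      have e1 := hL1 s hs.1 h
      have e2 := hL2 s hs.1 h
      have hΨs0 : 0 ≤ Ψ (1/(1-s)) := (hpos _ (by positivity)).le
      have hωs0 : 0 ≤ omHat ω s := omHat_nonneg hnn (le_trans hr.1 hs.1) h.le
      have e3 : Ψ (1/(1-s)) * (omHat ω s / (1-s)) ≤
          (B * ((1-r)/(1-s)) ^ δ * Ψ X) * ((C * ((1-s)/(1-r)) ^ α * omHat ω r) / (1-s)) := by
        apply mul_le_mul e1 ((div_le_div_iff_of_pos_right h1s).mpr e2) (by positivity)
        exact mul_nonneg (mul_nonneg hB0.le (Real.rpow_nonneg (by positivity) _)) hΨX.le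
      have e4 : (B * ((1-r)/(1-s)) ^ δ * Ψ X) * ((C * ((1-s)/(1-r)) ^ α * omHat ω r) / (1-s))
          = M * (1-s) ^ (δ - 1) := by
        rw [hM]
        have hαδ : α = δ + δ := by rw [hδdef]; ring
        rw [hαδ, Real.rpow_add (div_pos h1s h1r),
          Real.div_rpow h1r.le h1s.le, Real.div_rpow h1s.le h1r.le,
          Real.rpow_sub h1s, Real.rpow_one, Real.rpow_neg h1r.le]
        have hne1 : (1-s) ^ δ ≠ 0 := (Real.rpow_pos_of_pos h1s δ).ne'
        have hne2 : (1-r) ^ δ ≠ 0 := (Real.rpow_pos_of_pos h1r δ).ne'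
        field_simp
      exact le_of_le_of_eq e3 e4
  -- majorant integrability and value
  have hrpInt : IntervalIntegrable (fun s : ℝ => (1-s) ^ (δ-1)) volume r 1 := by
    have h1 : IntervalIntegrable (fun x : ℝ => x ^ (δ-1)) volume 0 (1-r) :=
      intervalIntegral.intervalIntegrable_rpow' (by linarith)
    have h2 := (h1.comp_sub_left 1).symm
    simpa using h2
  have hgInt : IntervalIntegrable (fun s : ℝ => M * (1-s) ^ (δ-1)) volume r 1 :=
    hrpInt.const_mul M
  have hgval : (∫ s in r..1, M * (1-s) ^ (δ-1)) = M * ((1-r) ^ δ / δ) := by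
    rw [intervalIntegral.integral_const_mul]
    congr 1
    rw [intervalIntegral.integral_comp_sub_left (fun x : ℝ => x ^ (δ-1)) 1]
    rw [integral_rpow (Or.inl (by linarith : (-1:ℝ) < δ-1))]
    norm_num
    rw [Real.zero_rpow hδ0.ne']
    ring
  -- LHS integrand aesm
  have hm1 : Measurable fun s : ℝ => Ψ (1/(1-s)) := hΨm.comp (by fun_prop)
  have homae : AEStronglyMeasurable (omHat ω) (volume.restrict (Set.Ioc r 1)) := by
    have hiInt : IntegrableOn ω (Set.Icc 0 1) volume := by
      rw [integrableOn_Icc_iff_integrableOn_Ioc]; exact hint.1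
    have hcont : ContinuousOn (fun x : ℝ => ∫ t in (0:ℝ)..x, ω t) (Set.Icc 0 1) := by
      have h5 := intervalIntegral.continuousOn_primitive_interval
        (a := (0:ℝ)) (b := 1) (μ := volume) (f := ω)
        (by rwa [uIcc_of_le (by norm_num : (0:ℝ) ≤ 1)])
      rwa [uIcc_of_le (by norm_num : (0:ℝ) ≤ 1)] at h5
    have haesm2 : AEStronglyMeasurable
        (fun x : ℝ => (∫ t in (0:ℝ)..1, ω t) - ∫ t in (0:ℝ)..x, ω t)
        (volume.restrict (Set.Ioc r 1)) := by
      have h3 : AEStronglyMeasurable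
          (fun x : ℝ => (∫ t in (0:ℝ)..1, ω t) - ∫ t in (0:ℝ)..x, ω t)
          (volume.restrict (Set.Icc 0 1)) :=
        (continuousOn_const.sub hcont).aestronglyMeasurable measurableSet_Icc
      exact h3.mono_measure
        (Measure.restrict_mono
          (show Set.Ioc r 1 ⊆ Set.Icc 0 1 from fun x hx => ⟨le_trans hr.1 hx.1.le, hx.2⟩)
          le_rfl)
    apply haesm2.congr
    filter_upwards [ae_restrict_mem measurableSet_Ioc] with s hs
    have h4 : omHat ω 0 = (∫ t in (0:ℝ)..s, ω t) + omHat ω s :=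
      omHat_split hint le_rfl (le_trans hr.1 hs.1.le) hs.2
    have h5 : omHat ω 0 = ∫ t in (0:ℝ)..1, ω t := rfl
    rw [h5] at h4
    linarith
  have hhm : AEStronglyMeasurable (fun s => Ψ (1/(1-s)) * (omHat ω s / (1-s)))
      (volume.restrict (Set.Ioc r 1)) := by
    simp_rw [div_eq_mul_inv]
    apply hm1.aestronglyMeasurable.mul
    exact homae.mul (Measurable.aestronglyMeasurable (by fun_prop))
  have hhnn : ∀ s ∈ Set.Ioc r 1, 0 ≤ Ψ (1/(1-s)) * (omHat ω s / (1-s)) := by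
    intro s hs
    rcases eq_or_lt_of_le hs.2 with h | h
    · subst h
      simp [omHat]
    · have h1s : 0 < 1 - s := by linarith
      exact mul_nonneg (hpos _ (by positivity)).le
        (div_nonneg (omHat_nonneg hnn (le_trans hr.1 hs.1.le) h.le) h1s.le)
  have hhInt : IntervalIntegrable (fun s => Ψ (1/(1-s)) * (omHat ω s / (1-s))) volume r 1 := by
    rw [intervalIntegrable_iff_integrableOn_Ioc_of_le hr.2.le]
    apply Integrable.mono'
      ((intervalIntegrable_iff_integrableOn_Ioc_of_le hr.2.le).mp hgInt) hhm
    filter_upwards [ae_restrict_mem measurableSet_Ioc] with s hs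
    rw [Real.norm_eq_abs, abs_of_nonneg (hhnn s hs)]
    exact hL3 s ⟨hs.1.le, hs.2⟩
  -- LHS bound
  have hLHS : (∫ s in r..1, Ψ (1/(1-s)) * (omHat ω s / (1-s))) ≤ M * ((1-r) ^ δ / δ) := by
    rw [← hgval]
    exact intervalIntegral.integral_mono_on hr.2.le hhInt hgInt hL3
  have hLHS2 : M * ((1-r) ^ δ / δ) = (B * C / δ) * (Ψ X * omHat ω r) := by
    rw [hM, Real.rpow_neg h1r.le]
    have hne : (1-r) ^ δ ≠ 0 := (Real.rpow_pos_of_pos h1r δ).ne'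
    field_simp
  -- RHS lower bound
  set t : ℝ := 1 - (1-r)/K with htdef
  have htmem : t ∈ Set.Ico r 1 := by
    have h5 := q_mem hK hr 1
    rw [pow_one] at h5
    exact h5
  have htr : r ≤ t := htmem.1
  have ht1 : t < 1 := htmem.2
  have hKey := key_integrableOn hnn hint hK hC hDc hr hδ0 hδC
  have hfm : AEStronglyMeasurable (fun s => Ψ (1/(1-s)) * ω s)
      (volume.restrict (Set.Ioc r 1)) :=
    hm1.aestronglyMeasurable.mul
      ((hint.1.mono_set (Set.Ioc_subset_Ioc hr.1 le_rfl)).aestronglyMeasurable)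
  have hfInt : IntervalIntegrable (fun s => Ψ (1/(1-s)) * ω s) volume r 1 := by
    rw [intervalIntegrable_iff_integrableOn_Ioc_of_le hr.2.le]
    apply Integrable.mono' (hKey.const_mul (B * Ψ X * (1-r) ^ δ)) hfm
    filter_upwards [ae_restrict_mem measurableSet_Ioc, ae_restrict_of_ae ae_ne_one]
      with s hs hs1
    have h : s < 1 := lt_of_le_of_ne hs.2 hs1
    have h1s : 0 < 1 - s := by linarith
    have hωs : 0 ≤ ω s := hnn s ⟨le_trans hr.1 hs.1.le, h⟩
    rw [Real.norm_eq_abs, abs_of_nonneg (mul_nonneg (hpos _ (by positivity)).le hωs)]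
    have e1 := hL1 s hs.1.le h
    have e5 : ((1-r)/(1-s)) ^ δ = (1-r) ^ δ * (1-s) ^ (-δ) := by
      rw [Real.div_rpow h1r.le h1s.le, Real.rpow_neg h1s.le, div_eq_mul_inv]
    calc Ψ (1/(1-s)) * ω s ≤ (B * ((1-r)/(1-s)) ^ δ * Ψ X) * ω s :=
        mul_le_mul_of_nonneg_right e1 hωs
      _ = (B * Ψ X * (1-r) ^ δ) * ((1-s) ^ (-δ) * ω s) := by rw [e5]; ring
  have hone : ∀ s ∈ Set.Icc r t, m * Ψ X ≤ Ψ (1/(1-s)) := by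
    intro s hs
    have hst1 : s < 1 := lt_of_le_of_lt hs.2 ht1
    have h1s : 0 < 1 - s := by linarith
    apply hmprop X (1/(1-s)) hX1
    · rw [hX]
      exact one_div_le_one_div_of_le h1s (by linarith [hs.1])
    · have h6 : (1-r)/K ≤ 1-s := by
        have h7 := hs.2
        rw [htdef] at h7
        linarith
      have h8 : 1-r ≤ K * (1-s) := by
        rw [div_le_iff₀ hK0] at h6
        linarith [h6]
      rw [hX, mul_one_div]
      rw [div_le_div_iff₀ h1s h1r]
      linarith
  have hsub1 : Set.uIcc r t ⊆ Set.uIcc r 1 := by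
    rw [uIcc_of_le htr, uIcc_of_le hr.2.le]
    exact Icc_subset_Icc le_rfl ht1.le
  have hsub2 : Set.uIcc t 1 ⊆ Set.uIcc r 1 := by
    rw [uIcc_of_le ht1.le, uIcc_of_le hr.2.le]
    exact Icc_subset_Icc htr le_rfl
  have hstep : m * Ψ X * (omHat ω r - omHat ω t) ≤ ∫ s in r..t, Ψ (1/(1-s)) * ω s := by
    have hc : (∫ s in r..t, m * Ψ X * ω s) ≤ ∫ s in r..t, Ψ (1/(1-s)) * ω s := by
      apply intervalIntegral.integral_mono_on htr
        ((subInt hint hr.1 hr.2.le (le_trans hr.1 htr) ht1.le).const_mul _)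
        (hfInt.mono_set hsub1)
      intro s hs
      have hst1 : s < 1 := lt_of_le_of_lt hs.2 ht1
      exact mul_le_mul_of_nonneg_right (hone s hs) (hnn s ⟨le_trans hr.1 hs.1, hst1⟩)
    calc m * Ψ X * (omHat ω r - omHat ω t)
        = m * Ψ X * ∫ s in r..t, ω s := by rw [intEqOmHatSub hint hr.1 htr ht1.le]
      _ = ∫ s in r..t, m * Ψ X * ω s := (intervalIntegral.integral_const_mul _ _).symm
      _ ≤ _ := hc
  have hsplitRHS : (∫ s in r..1, Ψ (1/(1-s)) * ω s) =
      (∫ s in r..t, Ψ (1/(1-s)) * ω s) + ∫ s in t..1, Ψ (1/(1-s)) * ω s :=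
    (intervalIntegral.integral_add_adjacent_intervals
      (hfInt.mono_set hsub1) (hfInt.mono_set hsub2)).symm
  have htail : 0 ≤ ∫ s in t..1, Ψ (1/(1-s)) * ω s := by
    apply intervalIntegral.integral_nonneg_of_ae_restrict ht1.le
    filter_upwards [ae_restrict_of_ae ae_ne_one, ae_restrict_mem measurableSet_Icc]
      with s hs1 hs2
    have hst1 : s < 1 := lt_of_le_of_ne hs2.2 hs1
    have h1s : 0 < 1 - s := by linarith
    exact mul_nonneg (hpos _ (by positivity)).le
      (hnn s ⟨le_trans (le_trans hr.1 htr) hs2.1, hst1⟩)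
  have homt : omHat ω t ≤ omHat ω r / C := by
    have h7 := hDc r hr
    rw [← htdef] at h7
    rw [le_div_iff₀ hC0]
    linarith
  have hRHS : m * (1 - 1/C) * (Ψ X * omHat ω r) ≤ ∫ s in r..1, Ψ (1/(1-s)) * ω s := by
    have h8 : (1 - 1/C) * omHat ω r ≤ omHat ω r - omHat ω t := by
      have h9 : omHat ω t ≤ (1/C) * omHat ω r := by
        rw [one_div, inv_mul_eq_div]
        exact homt
      nlinarith [hωr0]
    have h10 : 0 ≤ m * Ψ X := mul_nonneg hm0.le hΨX.le
    calc m * (1 - 1/C) * (Ψ X * omHat ω r)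
        = (m * Ψ X) * ((1 - 1/C) * omHat ω r) := by ring
      _ ≤ (m * Ψ X) * (omHat ω r - omHat ω t) := mul_le_mul_of_nonneg_left h8 h10
      _ ≤ ∫ s in r..t, Ψ (1/(1-s)) * ω s := hstep
      _ ≤ ∫ s in r..1, Ψ (1/(1-s)) * ω s := by rw [hsplitRHS]; linarith
  -- conclude
  calc (∫ s in r..1, Ψ (1 / (1 - s)) * (omHat ω s / (1 - s)))
      ≤ (B * C / δ) * (Ψ X * omHat ω r) := by rw [← hLHS2]; exact hLHS
    _ = ((B * C / δ) / (m * (1 - 1/C))) * (m * (1 - 1/C) * (Ψ X * omHat ω r)) := by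
        have hne : m * (1 - 1/C) ≠ 0 := hA₂0.ne'
        have hgen : ∀ Q : ℝ, (B * C / δ) / (m * (1 - 1/C)) * (m * (1 - 1/C) * Q)
            = (B * C / δ) * Q := by
          intro Q
          rw [← mul_assoc, div_mul_cancel₀ _ hne]
        exact (hgen (Ψ X * omHat ω r)).symm
    _ ≤ ((B * C / δ) / (m * (1 - 1/C))) * ∫ s in r..1, Ψ (1/(1-s)) * ω s :=
        mul_le_mul_of_nonneg_left hRHS (div_pos hA₁0 hA₂0).le
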